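/- arXiv:2510.03235 — 2 statements merged into one kernel-verified Lean document; each statement's English description precedes it below -/
import Mathlib

section
/- The graph whose vertices are the nonsingular symmetric 3×3 matrices over 𝔽₂, with A adjacent to B iff A ≠ B and A + B is singular, is strongly regular with parameters (28, 15, 6, 10). -/
open Matrix

/-- The vertex set: nonsingular symmetric `3 × 3` matrices over `𝔽₂`. -/
abbrev NSym3 : Type := {M : Matrix (Fin 3) (Fin 3) (ZMod 2) // Mᵀ = M ∧ M.det ≠ 0}

/-- The graph on nonsingular symmetric `3 × 3` matrices over `𝔽₂`, with `A` adjacent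
to `B` iff `A ≠ B` and `A + B` is singular. -/
def matrixGraph : SimpleGraph NSym3 where
  Adj A B := A ≠ B ∧ (A.1 + B.1).det = 0
  symm := by
    constructor
    rintro A B ⟨h1, h2⟩
    exact ⟨h1.symm, by rwa [add_comm]⟩
  loopless := by constructor; rintro A ⟨h, -⟩; exact h rfl

instance : DecidableRel matrixGraph.Adj := fun A B =>
  inferInstanceAs (Decidable (A ≠ B ∧ (A.1 + B.1).det = 0))


/-! The congruence action `A ↦ Pᵀ A P` of `GL₃(𝔽₂)` preserves symmetry, nonsingularity and
adjacency, because `det (Pᵀ (A + B) P) = det P ^ 2 * det (A + B)`. It is transitive on the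
vertices, since each of the 28 nonsingular symmetric matrices factors as `Qᵀ Q`, i.e. is congruent
to the identity. So the degree and the numbers of common neighbours only have to be counted at
the vertex `1`, which is a finite check. -/

theorem SimpleGraph.Iso.card_commonNeighbors_eq {V W : Type*} {G : SimpleGraph V}
    {G' : SimpleGraph W} (f : G ≃g G') (v w : V) [Fintype (G.commonNeighbors v w)]
    [Fintype (G'.commonNeighbors (f v) (f w))] :
    Fintype.card (G'.commonNeighbors (f v) (f w)) = Fintype.card (G.commonNeighbors v w) :=
  (Fintype.card_congr <| f.toEquiv.subtypeEquiv fun u => by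
    simp [SimpleGraph.mem_commonNeighbors, f.map_adj_iff]).symm

theorem Matrix.det_transpose_mul_mul {n R : Type*} [Fintype n] [DecidableEq n] [CommRing R]
    (P A : Matrix n n R) : (Pᵀ * A * P).det = P.det ^ 2 * A.det := by
  rw [det_mul, det_mul, det_transpose]
  ring

def congrAction (P : GL (Fin 3) (ZMod 2)) (A : NSym3) : NSym3 :=
  ⟨(P : Matrix (Fin 3) (Fin 3) (ZMod 2))ᵀ * A.1 * P,
    by rw [transpose_mul, transpose_mul, transpose_transpose, A.2.1, Matrix.mul_assoc],
    by
      rw [det_transpose_mul_mul]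
      exact mul_ne_zero (pow_ne_zero _ (isUnits_det_units P).ne_zero) A.2.2⟩

theorem leftInverse_congrAction_inv (P : GL (Fin 3) (ZMod 2)) :
    Function.LeftInverse (congrAction P⁻¹) (congrAction P) := by
  intro A
  ext1
  simp only [congrAction]
  rw [← Matrix.mul_assoc, ← Matrix.mul_assoc, ← transpose_mul,
    Matrix.mul_assoc _ _ (P⁻¹ : GL (Fin 3) (ZMod 2)).1]
  simp

def congruenceAut (P : GL (Fin 3) (ZMod 2)) : matrixGraph ≃g matrixGraph where
  toFun := congrAction P
  invFun := congrAction P⁻¹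
  left_inv := leftInverse_congrAction_inv P
  right_inv := by simpa [Function.RightInverse] using leftInverse_congrAction_inv P⁻¹
  map_rel_iff' {A B} := by
    have hadd : (congrAction P A).1 + (congrAction P B).1 =
        (P : Matrix (Fin 3) (Fin 3) (ZMod 2))ᵀ * (A.1 + B.1) * P := by
      simp only [congrAction, Matrix.mul_add, Matrix.add_mul]
    simp only [Equiv.coe_fn_mk, matrixGraph, ne_eq,
      (leftInverse_congrAction_inv P).injective.eq_iff, hadd, det_transpose_mul_mul, mul_eq_zero,
      pow_eq_zero_iff two_ne_zero, (isUnits_det_units P).ne_zero, false_or]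

theorem congruenceAut_apply (P : GL (Fin 3) (ZMod 2)) (A : NSym3) :
    congruenceAut P A = congrAction P A :=
  rfl

def oneVertex : NSym3 := ⟨1, by decide⟩

theorem exists_transpose_mul_self_eq :
    ∀ A : NSym3, ∃ Q : Matrix (Fin 3) (Fin 3) (ZMod 2), Qᵀ * Q = A.1 := by
  decide +kernel

theorem exists_congruenceAut_oneVertex_eq (A : NSym3) : ∃ P, congruenceAut P oneVertex = A := by
  obtain ⟨Q, hQ⟩ := exists_transpose_mul_self_eq A
  have hdet : Q.det ≠ 0 := fun h => A.2.2 (by rw [← hQ, det_mul, h, mul_zero])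
  refine ⟨.mkOfDetNeZero Q hdet, Subtype.ext ?_⟩
  simp only [congruenceAut_apply, congrAction, oneVertex, Matrix.mul_one]
  exact hQ

theorem card_NSym3 : Fintype.card NSym3 = 28 := by
  decide +kernel

theorem degree_oneVertex : matrixGraph.degree oneVertex = 15 := by
  decide +kernel

theorem card_commonNeighbors_oneVertex_of_adj :
    ∀ B, matrixGraph.Adj oneVertex B →
      Fintype.card (matrixGraph.commonNeighbors oneVertex B) = 6 := by
  decide +kernel

theorem card_commonNeighbors_oneVertex_of_not_adj :
    ∀ B, B ≠ oneVertex → ¬matrixGraph.Adj oneVertex B →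
      Fintype.card (matrixGraph.commonNeighbors oneVertex B) = 10 := by
  decide +kernel

/-- The graph on nonsingular symmetric `3 × 3` matrices over `𝔽₂`, adjacency
`A ≠ B` and `det (A + B) = 0`, is strongly regular with parameters `(28, 15, 6, 10)`. -/
theorem matrixGraph_isSRG : matrixGraph.IsSRGWith 28 15 6 10 := by
  refine ⟨card_NSym3, fun A => ?_, fun A B hAB => ?_, fun A B hne hAB => ?_⟩ <;>
    obtain ⟨P, rfl⟩ := exists_congruenceAut_oneVertex_eq A
  · rw [SimpleGraph.Iso.degree_eq, degree_oneVertex]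
  · obtain ⟨B, rfl⟩ := (congruenceAut P).surjective B
    rw [SimpleGraph.Iso.card_commonNeighbors_eq]
    exact card_commonNeighbors_oneVertex_of_adj B ((congruenceAut P).map_adj_iff.mp hAB)
  · obtain ⟨B, rfl⟩ := (congruenceAut P).surjective B
    rw [SimpleGraph.Iso.card_commonNeighbors_eq]
    exact card_commonNeighbors_oneVertex_of_not_adj B (fun h => hne (congrArg _ h.symm))
      (fun h => hAB ((congruenceAut P).map_adj_iff.mpr h))
end

section
/- Each nonsingular symmetric 3×3 matrix A over 𝔽₂ has exactly 15 nonsingular symmetric 3×3 matrices B ≠ A over 𝔽₂ with A + B singular. -/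
open Matrix Finset

private lemma sq_decomp (A : Matrix (Fin 3) (Fin 3) (ZMod 2))
    (hA : Aᵀ = A) (hdet : A.det = 1) :
    ∃ P : Matrix (Fin 3) (Fin 3) (ZMod 2), P.det = 1 ∧ A = Pᵀ * P := by
  obtain ⟨a, b, c, d, e, f, rfl⟩ :
      ∃ a b c d e f, A = !![a, b, c; b, d, e; c, e, f] := by
    refine ⟨A 0 0, A 0 1, A 0 2, A 1 1, A 1 2, A 2 2, ?_⟩
    have h10 : A 1 0 = A 0 1 := (congrFun (congrFun hA 1) 0).symm
    have h20 : A 2 0 = A 0 2 := (congrFun (congrFun hA 2) 0).symm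
    have h21 : A 2 1 = A 1 2 := (congrFun (congrFun hA 2) 1).symm
    conv_lhs => rw [Matrix.eta_fin_three A]
    rw [h10, h20, h21]
  fin_cases a <;> fin_cases b <;> fin_cases c <;> fin_cases d <;> fin_cases e <;> fin_cases f <;>
    first
      | exact absurd hdet (by decide)
      | exact ⟨(!![0,1,1;1,1,0;1,1,1] : Matrix (Fin 3) (Fin 3) (ZMod 2)), by decide, by decide⟩
      | exact ⟨(!![0,1,0;1,0,0;1,0,1] : Matrix (Fin 3) (Fin 3) (ZMod 2)), by decide, by decide⟩
      | exact ⟨(!![0,1,1;1,0,0;1,0,1] : Matrix (Fin 3) (Fin 3) (ZMod 2)), by decide, by decide⟩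
      | exact ⟨(!![0,1,0;1,1,0;1,1,1] : Matrix (Fin 3) (Fin 3) (ZMod 2)), by decide, by decide⟩
      | exact ⟨(!![0,1,1;1,0,1;1,1,1] : Matrix (Fin 3) (Fin 3) (ZMod 2)), by decide, by decide⟩
      | exact ⟨(!![0,1,1;1,0,0;1,1,0] : Matrix (Fin 3) (Fin 3) (ZMod 2)), by decide, by decide⟩
      | exact ⟨(!![0,0,1;1,0,0;1,1,0] : Matrix (Fin 3) (Fin 3) (ZMod 2)), by decide, by decide⟩
      | exact ⟨(!![0,0,1;1,0,1;1,1,1] : Matrix (Fin 3) (Fin 3) (ZMod 2)), by decide, by decide⟩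
      | exact ⟨(!![0,1,0;1,0,1;1,1,0] : Matrix (Fin 3) (Fin 3) (ZMod 2)), by decide, by decide⟩
      | exact ⟨(!![0,1,0;1,0,0;1,1,1] : Matrix (Fin 3) (Fin 3) (ZMod 2)), by decide, by decide⟩
      | exact ⟨(!![0,0,1;1,0,1;1,1,0] : Matrix (Fin 3) (Fin 3) (ZMod 2)), by decide, by decide⟩
      | exact ⟨(!![0,0,1;1,0,0;1,1,1] : Matrix (Fin 3) (Fin 3) (ZMod 2)), by decide, by decide⟩
      | exact ⟨(!![1,0,1;1,1,0;1,1,1] : Matrix (Fin 3) (Fin 3) (ZMod 2)), by decide, by decide⟩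
      | exact ⟨(!![0,1,0;0,1,1;1,0,0] : Matrix (Fin 3) (Fin 3) (ZMod 2)), by decide, by decide⟩
      | exact ⟨(!![0,0,1;0,1,0;1,0,0] : Matrix (Fin 3) (Fin 3) (ZMod 2)), by decide, by decide⟩
      | exact ⟨(!![0,0,1;0,1,1;1,0,0] : Matrix (Fin 3) (Fin 3) (ZMod 2)), by decide, by decide⟩
      | exact ⟨(!![0,1,0;0,1,1;1,0,1] : Matrix (Fin 3) (Fin 3) (ZMod 2)), by decide, by decide⟩
      | exact ⟨(!![1,0,0;1,1,0;1,1,1] : Matrix (Fin 3) (Fin 3) (ZMod 2)), by decide, by decide⟩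
      | exact ⟨(!![0,0,1;0,1,0;1,0,1] : Matrix (Fin 3) (Fin 3) (ZMod 2)), by decide, by decide⟩
      | exact ⟨(!![0,0,1;0,1,1;1,0,1] : Matrix (Fin 3) (Fin 3) (ZMod 2)), by decide, by decide⟩
      | exact ⟨(!![0,0,1;0,1,0;1,1,0] : Matrix (Fin 3) (Fin 3) (ZMod 2)), by decide, by decide⟩
      | exact ⟨(!![0,0,1;0,1,1;1,1,0] : Matrix (Fin 3) (Fin 3) (ZMod 2)), by decide, by decide⟩
      | exact ⟨(!![1,0,0;1,0,1;1,1,1] : Matrix (Fin 3) (Fin 3) (ZMod 2)), by decide, by decide⟩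
      | exact ⟨(!![0,1,0;0,1,1;1,1,0] : Matrix (Fin 3) (Fin 3) (ZMod 2)), by decide, by decide⟩
      | exact ⟨(!![0,0,1;0,1,1;1,1,1] : Matrix (Fin 3) (Fin 3) (ZMod 2)), by decide, by decide⟩
      | exact ⟨(!![0,0,1;0,1,0;1,1,1] : Matrix (Fin 3) (Fin 3) (ZMod 2)), by decide, by decide⟩
      | exact ⟨(!![0,1,0;0,1,1;1,1,1] : Matrix (Fin 3) (Fin 3) (ZMod 2)), by decide, by decide⟩
      | exact ⟨(!![1,0,0;1,0,1;1,1,0] : Matrix (Fin 3) (Fin 3) (ZMod 2)), by decide, by decide⟩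

private lemma conj_mem (Q A B : Matrix (Fin 3) (Fin 3) (ZMod 2)) (hQ : Q.det = 1)
    (h1 : Bᵀ = B) (h2 : B.det = 1) (h3 : B ≠ A) (h4 : (A + B).det = 0) :
    (Qᵀ * B * Q)ᵀ = Qᵀ * B * Q ∧ (Qᵀ * B * Q).det = 1 ∧
      Qᵀ * B * Q ≠ Qᵀ * A * Q ∧ (Qᵀ * A * Q + Qᵀ * B * Q).det = 0 := by
  have hQu : IsUnit Q.det := by rw [hQ]; exact isUnit_one
  have hQtu : IsUnit Qᵀ.det := by rw [Matrix.det_transpose, hQ]; exact isUnit_one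
  have hQi : Q * Q⁻¹ = 1 := Matrix.mul_nonsing_inv Q hQu
  have hQti : Qᵀ⁻¹ * Qᵀ = 1 := Matrix.nonsing_inv_mul Qᵀ hQtu
  have key : ∀ X : Matrix (Fin 3) (Fin 3) (ZMod 2), Qᵀ⁻¹ * (Qᵀ * X * Q) * Q⁻¹ = X := by
    intro X
    simp only [← mul_assoc]
    rw [hQti, one_mul, mul_assoc, hQi, mul_one]
  refine ⟨?_, ?_, ?_, ?_⟩
  · rw [Matrix.transpose_mul, Matrix.transpose_mul, Matrix.transpose_transpose, h1,
      mul_assoc]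
  · rw [Matrix.det_mul, Matrix.det_mul, Matrix.det_transpose, hQ, h2]; ring
  · intro h
    exact h3 (by rw [← key B, h, key A])
  · have hrw : Qᵀ * A * Q + Qᵀ * B * Q = Qᵀ * (A + B) * Q := by
      rw [mul_add, add_mul]
    rw [hrw, Matrix.det_mul, Matrix.det_mul, Matrix.det_transpose, hQ, h4]; ring

private lemma conj_card (P : Matrix (Fin 3) (Fin 3) (ZMod 2)) (hP : P.det = 1) :
    (Finset.univ.filter
      (fun B : Matrix (Fin 3) (Fin 3) (ZMod 2) =>
        Bᵀ = B ∧ B.det = 1 ∧ B ≠ Pᵀ * P ∧ (Pᵀ * P + B).det = 0)).card =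
    (Finset.univ.filter
      (fun B : Matrix (Fin 3) (Fin 3) (ZMod 2) =>
        Bᵀ = B ∧ B.det = 1 ∧ B ≠ 1 ∧ ((1 : Matrix (Fin 3) (Fin 3) (ZMod 2)) + B).det = 0)).card := by
  have hPu : IsUnit P.det := by rw [hP]; exact isUnit_one
  have hPtu : IsUnit Pᵀ.det := by rw [Matrix.det_transpose, hP]; exact isUnit_one
  have hPi : P⁻¹ * P = 1 := Matrix.nonsing_inv_mul P hPu
  have hPi' : P * P⁻¹ = 1 := Matrix.mul_nonsing_inv P hPu
  have hPti : Pᵀ⁻¹ * Pᵀ = 1 := Matrix.nonsing_inv_mul Pᵀ hPtu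
  have hPti' : Pᵀ * Pᵀ⁻¹ = 1 := Matrix.mul_nonsing_inv Pᵀ hPtu
  have hdetPinv : (P⁻¹).det = 1 := by
    rw [Matrix.det_nonsing_inv, hP]; simp
  have htinv : (P⁻¹)ᵀ = Pᵀ⁻¹ := Matrix.transpose_nonsing_inv P
  symm
  refine Finset.card_bij' (fun B _ => Pᵀ * B * P) (fun C _ => Pᵀ⁻¹ * C * P⁻¹) ?_ ?_ ?_ ?_
  · intro B hB
    simp only [Finset.mem_filter, Finset.mem_univ, true_and] at hB ⊢
    have h := conj_mem P 1 B hP hB.1 hB.2.1 hB.2.2.1 hB.2.2.2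
    rwa [mul_one] at h
  · intro C hC
    simp only [Finset.mem_filter, Finset.mem_univ, true_and] at hC ⊢
    have h := conj_mem P⁻¹ (Pᵀ * P) C hdetPinv hC.1 hC.2.1 hC.2.2.1 hC.2.2.2
    rw [htinv] at h
    have hone : Pᵀ⁻¹ * (Pᵀ * P) * P⁻¹ = 1 := by
      simp only [← mul_assoc]
      rw [hPti, one_mul, hPi']
    rwa [hone] at h
  · intro B hB
    simp only [← mul_assoc]
    rw [hPti, one_mul, mul_assoc, hPi', mul_one]
  · intro C hC
    simp only [← mul_assoc]
    rw [hPti', one_mul, mul_assoc, hPi, mul_one]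

private lemma base_case :
    (Finset.univ.filter
      (fun B : Matrix (Fin 3) (Fin 3) (ZMod 2) =>
        Bᵀ = B ∧ B.det = 1 ∧ B ≠ 1 ∧ ((1 : Matrix (Fin 3) (Fin 3) (ZMod 2)) + B).det = 0)).card = 15 := by
  decide

/-- Each nonsingular symmetric `3 × 3` matrix `A` over `𝔽₂` has exactly `15`
nonsingular symmetric `3 × 3` matrices `B ≠ A` over `𝔽₂` with `A + B` singular. -/
theorem card_neighbours_nonsingular_symmetric (A : Matrix (Fin 3) (Fin 3) (ZMod 2))
    (hA : Aᵀ = A) (hdet : A.det = 1) :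
    (Finset.univ.filter
      (fun B : Matrix (Fin 3) (Fin 3) (ZMod 2) =>
        Bᵀ = B ∧ B.det = 1 ∧ B ≠ A ∧ (A + B).det = 0)).card = 15 := by
  obtain ⟨P, hP, rfl⟩ := sq_decomp A hA hdet
  rw [conj_card P hP, base_case]
end
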